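/- Let λ ∈ k and let φ(x₁,x₂) = ⌊x₁⌋⌊x₂⌋ − ⌊x₁⌊x₂⌋⌋ − ⌊⌊x₁⌋x₂⌋ − λ·x₁x₂ be the modified Rota–Baxter OPI of weight λ. Let Z be a set and let ≤ be a monomial order on M(Z) such that lm(φ(u₁,u₂)) = ⌊u₁⌋⌊u₂⌋ for all u₁, u₂ ∈ M(Z). Then S_φ(Z) is a Gröbner–Shirshov basis in kM(Z) with respect to ≤; hence, whenever such a monomial order exists for every set Z, the modified Rota–Baxter OPI is Gröbner–Shirshov. -/

import Mathlib

/-!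
Since `lm φ(u,v) = ⌊u⌋⌊v⌋`, two leading monomials can only overlap as `⌊a⌋⌊b⌋⌊c⌋`, and one
contains the other only if the star sits inside one of the two brackets of `⌊a⌋⌊b⌋` (or the
context is trivial). In each case the composition is written explicitly as a combination of
instances `q|_{φ(x,y)}`, and compatibility of the order bounds each `q|_{⌊x⌋⌊y⌋}` below `w`.
The one subtlety is `φ(1,1) = ⌊1⌋⌊1⌋ - 2⌊⌊1⌋⌋ - λ`: in characteristic 2 the comparison
`⌊⌊1⌋⌋ < ⌊1⌋⌊1⌋` is not available, but then the two instances that would need it coincide and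
cancel.
-/

namespace RotaGS

/-- Bracketed words on `Z`: elements of the free operated monoid `M(Z)`.
A bracketed word is a (possibly empty) list of letters, each letter being either a
variable from `Z` or a bracketed word `⌊u⌋`. -/
inductive OpWord (Z : Type) : Type
  | one : OpWord Z
  | var : Z → OpWord Z → OpWord Z
  | brkCons : OpWord Z → OpWord Z → OpWord Z

namespace OpWord

variable {Z : Type}

/-- Concatenation (product) of bracketed words. -/
def mul : OpWord Z → OpWord Z → OpWord Z
  | one, w => w
  | var z u, w => var z (mul u w)
  | brkCons b u, w => brkCons b (mul u w)

instance : Mul (OpWord Z) := ⟨mul⟩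
instance : One (OpWord Z) := ⟨one⟩

/-- The operator `u ↦ ⌊u⌋`. -/
def brk (u : OpWord Z) : OpWord Z := brkCons u one

/-- Substitution of bracketed words for variables. -/
def substVar {Y : Type} (σ : Z → OpWord Y) : OpWord Z → OpWord Y
  | one => one
  | var z w => (σ z).mul (substVar σ w)
  | brkCons u w => brkCons (substVar σ u) (substVar σ w)

/-- The breadth `|f|` of a bracketed word. -/
def breadth : OpWord Z → ℕ
  | one => 0
  | var _ w => 1 + breadth w
  | brkCons _ w => 1 + breadth w

/-- Number of occurrences of the variable `x` in a bracketed word. -/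
def varCount [DecidableEq Z] (x : Z) : OpWord Z → ℕ
  | one => 0
  | var z w => (if z = x then 1 else 0) + varCount x w
  | brkCons u w => varCount x u + varCount x w

end OpWord

/-- `⋆`-bracketed words on `Z`: bracketed words on `Z ∪ {⋆}` with exactly one
occurrence of `⋆`. -/
inductive StarWord (Z : Type) : Type
  | star : StarWord Z
  | brk : StarWord Z → StarWord Z
  | mul : OpWord Z → StarWord Z → OpWord Z → StarWord Z

/-- `q|_u` : replace `⋆` in `q` by the bracketed word `u`. -/
def StarWord.subst {Z : Type} : StarWord Z → OpWord Z → OpWord Z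
  | .star, u => u
  | .brk q, u => OpWord.brk (q.subst u)
  | .mul a q b, u => a.mul ((q.subst u).mul b)

/-- The free `k`-module `kM(Z)` with basis the bracketed words `M(Z)`. -/
abbrev kM (k Z : Type) [Field k] : Type := OpWord Z →₀ k

/-- The linear extension `q|_s` of `u ↦ q|_u`. -/
noncomputable def StarWord.substF {k Z : Type} [Field k] (q : StarWord Z) (s : kM k Z) : kM k Z :=
  Finsupp.mapDomain q.subst s

/-- Substitution (evaluation) of an operated polynomial `φ ∈ kM(X)` along an
assignment `σ` of bracketed words to the variables. -/
noncomputable def substOPI {k X Z : Type} [Field k] (σ : X → OpWord Z) (φ : kM k X) : kM k Z :=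
  Finsupp.mapDomain (OpWord.substVar σ) φ

/-- Right multiplication `f · u` of `f ∈ kM(Z)` by a word `u`. -/
noncomputable def mulWordRight {k Z : Type} [Field k] (f : kM k Z) (u : OpWord Z) : kM k Z :=
  Finsupp.mapDomain (fun m => m.mul u) f

/-- Left multiplication `v · g` of `g ∈ kM(Z)` by a word `v`. -/
noncomputable def mulWordLeft {k Z : Type} [Field k] (v : OpWord Z) (g : kM k Z) : kM k Z :=
  Finsupp.mapDomain (fun m => v.mul m) g

/-- `lt` is a monomial order on `M(Z)`: a well-order such that `u < v` implies
`q|_u < q|_v` for every `⋆`-bracketed word `q`. -/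
structure IsMonomialOrder {Z : Type} (lt : OpWord Z → OpWord Z → Prop) : Prop where
  wellOrder : IsWellOrder (OpWord Z) lt
  compat : ∀ (q : StarWord Z) (u v : OpWord Z), lt u v → lt (q.subst u) (q.subst v)

/-- `w` is the leading monomial of `f` with respect to the strict order `lt`. -/
def IsLeadingMonomial {k Z : Type} [Field k] (lt : OpWord Z → OpWord Z → Prop)
    (f : kM k Z) (w : OpWord Z) : Prop :=
  w ∈ f.support ∧ ∀ w' ∈ f.support, w' ≠ w → lt w' w

/-- `S` is monicized with respect to `lt`: every `s ∈ S` has leading coefficient `1`. -/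
def Monicized {k Z : Type} [Field k] (lt : OpWord Z → OpWord Z → Prop)
    (S : Set (kM k Z)) : Prop :=
  ∀ s ∈ S, ∃ w, IsLeadingMonomial lt s w ∧ s w = 1

/-- `R(s)` for `s` oriented at the monomial `w`, after monicization:
`R(s) = w − (coefficient of w in s)⁻¹ • s`. -/
noncomputable def Rrem {k Z : Type} [Field k] (s : kM k Z) (w : OpWord Z) : kM k Z :=
  Finsupp.single w 1 - (s w)⁻¹ • s

section TRS

variable {k W : Type} [Field k]

/-- One-step rewriting for a term-rewriting system `R ⊆ W × kW` on the free module
with basis `W`: if `f = c·t + f'` with `c ≠ 0`, `t ∉ Supp f'` and `(t,v) ∈ R`,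
then `f` rewrites to `c·v + f'`. -/
def OneStep (R : Set (W × (W →₀ k))) (f g : W →₀ k) : Prop :=
  ∃ (c : k) (t : W) (v f' : W →₀ k),
    c ≠ 0 ∧ (t, v) ∈ R ∧ t ∉ f'.support ∧
    f = Finsupp.single t c + f' ∧ g = c • v + f'

/-- `f →* g`: reflexive-transitive closure of one-step rewriting. -/
def Rewrites (R : Set (W × (W →₀ k))) : (W →₀ k) → (W →₀ k) → Prop :=
  Relation.ReflTransGen (OneStep R)

/-- `f ↓ g`: joinability. -/
def Joinable (R : Set (W × (W →₀ k))) (f g : W →₀ k) : Prop :=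
  ∃ h, Rewrites R f h ∧ Rewrites R g h

/-- A term-rewriting system is simple if `t ∉ Supp v` for every rule `t → v`. -/
def SimpleTRS (R : Set (W × (W →₀ k))) : Prop := ∀ p ∈ R, p.1 ∉ p.2.support

/-- Terminating: no infinite chain of one-step rewritings. -/
def Terminating (R : Set (W × (W →₀ k))) : Prop :=
  ¬ ∃ seq : ℕ → (W →₀ k), ∀ n, OneStep R (seq n) (seq (n + 1))

/-- Confluent: every fork is joinable. -/
def Confluent (R : Set (W × (W →₀ k))) : Prop :=
  ∀ ⦃f g₁ g₂ : W →₀ k⦄, Rewrites R f g₁ → Rewrites R f g₂ → Joinable R g₁ g₂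

/-- Locally confluent: every local fork is joinable. -/
def LocallyConfluent (R : Set (W × (W →₀ k))) : Prop :=
  ∀ ⦃f g₁ g₂ : W →₀ k⦄, OneStep R f g₁ → OneStep R f g₂ → Joinable R g₁ g₂

/-- Convergent: terminating and confluent. -/
def ConvergentTRS (R : Set (W × (W →₀ k))) : Prop := Terminating R ∧ Confluent R

end TRS

/-- The term-rewriting system `Π_S` from the order `lt`:
rules `q|_{lm(s)} → q|_{R(s)}` for `s ∈ S`, `q ∈ M^⋆(Z)`. -/
def PiS {k Z : Type} [Field k] (lt : OpWord Z → OpWord Z → Prop) (S : Set (kM k Z)) :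
    Set (OpWord Z × kM k Z) :=
  { p | ∃ s ∈ S, ∃ w, IsLeadingMonomial lt s w ∧
        ∃ q : StarWord Z, p = (q.subst w, q.substF (Rrem s w)) }

/-- The term-rewriting system associated to `S` with respect to an
orientation `or` (a choice of a monomial `or s` for each `s ∈ S`). -/
def assocTRS {k Z : Type} [Field k] (S : Set (kM k Z)) (or : kM k Z → OpWord Z) :
    Set (OpWord Z × kM k Z) :=
  { p | ∃ s ∈ S, ∃ q : StarWord Z, p = (q.subst (or s), q.substF (Rrem s (or s))) }

/-- `or` is an orientation of `S`: it picks a monomial of each `s ∈ S`. -/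
def IsOrientation {k Z : Type} [Field k] (S : Set (kM k Z)) (or : kM k Z → OpWord Z) : Prop :=
  ∀ s ∈ S, or s ∈ s.support

/-- The operated ideal `Id(S)` generated by `S`:
`Id(S) = { Σᵢ cᵢ qᵢ|_{sᵢ} : cᵢ ∈ k, qᵢ ∈ M^⋆(Z), sᵢ ∈ S }`. -/
noncomputable def OpIdeal {k Z : Type} [Field k] (S : Set (kM k Z)) : Submodule k (kM k Z) :=
  Submodule.span k { x | ∃ s ∈ S, ∃ q : StarWord Z, x = q.substF s }

/-- `Irr(S) = M(Z) ∖ { q|_{lm(s)} : q ∈ M^⋆(Z), s ∈ S }`. -/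
def IrrSet {k Z : Type} [Field k] (lt : OpWord Z → OpWord Z → Prop) (S : Set (kM k Z)) :
    Set (OpWord Z) :=
  { w | ¬ ∃ s ∈ S, ∃ ws, IsLeadingMonomial lt s ws ∧ ∃ q : StarWord Z, w = q.subst ws }

/-- The `k`-linear span of a set of bracketed words inside `kM(Z)`. -/
noncomputable def spanSet (k : Type) [Field k] {Z : Type} (T : Set (OpWord Z)) : Submodule k (kM k Z) :=
  Submodule.span k ((fun w => Finsupp.single w (1 : k)) '' T)

/-- `h` is trivial modulo `(S, w)`: `h = Σᵢ cᵢ qᵢ|_{sᵢ}` with `qᵢ|_{lm(sᵢ)} < w`. -/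
def TrivialMod {k Z : Type} [Field k] (lt : OpWord Z → OpWord Z → Prop)
    (S : Set (kM k Z)) (w : OpWord Z) (h : kM k Z) : Prop :=
  ∃ (n : ℕ) (c : Fin n → k) (q : Fin n → StarWord Z) (s : Fin n → kM k Z),
    (∀ i, s i ∈ S) ∧
    (∀ i, ∃ wi, IsLeadingMonomial lt (s i) wi ∧ lt ((q i).subst wi) w) ∧
    h = ∑ i, c i • (q i).substF (s i)

/-- The monicization of `S` with respect to `lt`. -/
def MonicVersion {k Z : Type} [Field k] (lt : OpWord Z → OpWord Z → Prop)
    (S : Set (kM k Z)) : Set (kM k Z) :=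
  { f | ∃ s ∈ S, ∃ w, IsLeadingMonomial lt s w ∧ f = (s w)⁻¹ • s }

/-- `S` is a Gröbner–Shirshov basis in `kM(Z)` with respect to `lt`: after
monicization, every intersection composition and every including composition of
pairs of elements of `S` is trivial modulo `(S, w)`. -/
def IsGSBasis {k Z : Type} [Field k] (lt : OpWord Z → OpWord Z → Prop)
    (S : Set (kM k Z)) : Prop :=
  (∀ f ∈ MonicVersion lt S, ∀ g ∈ MonicVersion lt S,
    ∀ (wf wg u v w : OpWord Z),
      IsLeadingMonomial lt f wf → IsLeadingMonomial lt g wg →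
      w = wf.mul u → w = v.mul wg →
      max wf.breadth wg.breadth < w.breadth →
      w.breadth < wf.breadth + wg.breadth →
      TrivialMod lt (MonicVersion lt S) w (mulWordRight f u - mulWordLeft v g)) ∧
  (∀ f ∈ MonicVersion lt S, ∀ g ∈ MonicVersion lt S,
    ∀ (wf wg : OpWord Z) (q : StarWord Z),
      IsLeadingMonomial lt f wf → IsLeadingMonomial lt g wg →
      wf = q.subst wg →
      TrivialMod lt (MonicVersion lt S) wf (f - q.substF g))

/-- `S_Φ(Z)`: all substitution instances in `kM(Z)` of OPIs from `Φ ⊆ kM(X)`. -/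
def SPhi {k X : Type} [Field k] (Φ : Set (kM k X)) (Z : Type) : Set (kM k Z) :=
  { f | ∃ φ ∈ Φ, ∃ σ : X → OpWord Z, f = substOPI σ φ }

/-- A system of OPIs `Φ` is Gröbner–Shirshov if for every set `Z` there is a
monomial order on `M(Z)` making `S_Φ(Z)` a Gröbner–Shirshov basis. -/
def GSOPI {k X : Type} [Field k] (Φ : Set (kM k X)) : Prop :=
  ∀ Z : Type, ∃ lt : OpWord Z → OpWord Z → Prop,
    IsMonomialOrder lt ∧ IsGSBasis lt (SPhi Φ Z)

/-- A system of OPIs `Φ` is convergent if for every set `Z` there is an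
orientation of `S_Φ(Z)` whose associated term-rewriting system is convergent. -/
def ConvergentOPI {k X : Type} [Field k] (Φ : Set (kM k X)) : Prop :=
  ∀ Z : Type, ∃ or : kM k Z → OpWord Z,
    IsOrientation (SPhi Φ Z) or ∧ ConvergentTRS (assocTRS (SPhi Φ Z) or)

/-- The first variable `x₁`. -/
def x1 : OpWord (Fin 2) := OpWord.var 0 OpWord.one

/-- The second variable `x₂`. -/
def x2 : OpWord (Fin 2) := OpWord.var 1 OpWord.one

/-- The averaging OPI `φ₁ = ⌊x₁⌋⌊x₂⌋ − ⌊⌊x₁⌋x₂⌋`. -/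
noncomputable def phi1 (k : Type) [Field k] : kM k (Fin 2) :=
  Finsupp.single ((OpWord.brk x1).mul (OpWord.brk x2)) 1
    - Finsupp.single (OpWord.brk ((OpWord.brk x1).mul x2)) 1

/-- The averaging OPI `φ₂ = ⌊x₁⌊x₂⌋⌋ − ⌊⌊x₁⌋x₂⌋`. -/
noncomputable def phi2 (k : Type) [Field k] : kM k (Fin 2) :=
  Finsupp.single (OpWord.brk (x1.mul (OpWord.brk x2))) 1
    - Finsupp.single (OpWord.brk ((OpWord.brk x1).mul x2)) 1

end RotaGS

namespace RotaGS

/-- The modified Rota–Baxter OPI of weight `λ`: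
`φ(x₁,x₂) = ⌊x₁⌋⌊x₂⌋ − ⌊x₁⌊x₂⌋⌋ − ⌊⌊x₁⌋x₂⌋ − λ·x₁x₂`. -/
noncomputable def mrbPhi (k : Type) [Field k] (lam : k) : kM k (Fin 2) :=
  Finsupp.single ((OpWord.brk x1).mul (OpWord.brk x2)) 1
    - Finsupp.single (OpWord.brk (x1.mul (OpWord.brk x2))) 1
    - Finsupp.single (OpWord.brk ((OpWord.brk x1).mul x2)) 1
    - lam • Finsupp.single (x1.mul x2) 1

namespace OpWord

variable {Z : Type}

instance : Monoid (OpWord Z) where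
  mul := mul
  one := one
  mul_assoc u v w := by
    induction u with
    | one => rfl
    | var z u ih => exact congrArg (var z) ih
    | brkCons b u _ ih => exact congrArg (brkCons b) ih
  one_mul _ := rfl
  mul_one u := by
    induction u with
    | one => rfl
    | var z u ih => exact congrArg (var z) ih
    | brkCons b u _ ih => exact congrArg (brkCons b) ih

@[simp] lemma mul_eq_mul (u v : OpWord Z) : u.mul v = u * v := rfl

@[simp] lemma one_eq_one : (one : OpWord Z) = 1 := rfl

lemma brkCons_eq_brk_mul (u v : OpWord Z) : brkCons u v = brk u * v := rfl

@[simp] lemma brk_mul_inj {a b u v : OpWord Z} : brk a * u = brk b * v ↔ a = b ∧ u = v :=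
  brkCons.injEq a u b v ▸ Iff.rfl

@[simp] lemma brk_mul_eq_brk {a b u : OpWord Z} : brk a * u = brk b ↔ a = b ∧ u = 1 :=
  brkCons.injEq a u b one ▸ Iff.rfl

@[simp] lemma brk_mul_ne_one (a u : OpWord Z) : brk a * u ≠ 1 := nofun

@[simp] lemma brk_ne_one (a : OpWord Z) : brk a ≠ 1 := nofun

@[simp] lemma breadth_one : breadth (1 : OpWord Z) = 0 := rfl

@[simp] lemma breadth_brk (u : OpWord Z) : breadth (brk u) = 1 := rfl

@[simp] lemma breadth_mul (u v : OpWord Z) : breadth (u * v) = breadth u + breadth v := by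
  induction u with
  | one => simp
  | var z u ih => show 1 + breadth (u * v) = 1 + breadth u + breadth v; omega
  | brkCons b u _ ih => show 1 + breadth (u * v) = 1 + breadth u + breadth v; omega

lemma eq_one_and_eq_one_of_mul_eq_one {u v : OpWord Z} (h : u * v = 1) : u = 1 ∧ v = 1 := by
  cases u with
  | one => exact ⟨rfl, h⟩
  | var z u => exact absurd h nofun
  | brkCons b u => exact absurd h nofun

def size : OpWord Z → ℕ
  | one => 0
  | var _ w => 1 + size w
  | brkCons u w => 1 + size u + size w

@[simp] lemma size_one : size (1 : OpWord Z) = 0 := rfl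

@[simp] lemma size_brk (u : OpWord Z) : size (brk u) = 1 + size u := rfl

@[simp] lemma size_mul (u v : OpWord Z) : size (u * v) = size u + size v := by
  induction u with
  | one => simp
  | var z u ih => show 1 + size (u * v) = 1 + size u + size v; omega
  | brkCons b u _ ih => show 1 + size b + size (u * v) = 1 + size b + size u + size v; omega

@[simp] lemma brk_inj {x y : OpWord Z} : brk x = brk y ↔ x = y :=
  ⟨fun h => by injection h, congrArg brk⟩

lemma brk_ne_brk_mul_brk (x u v : OpWord Z) : brk x ≠ brk u * brk v :=
  fun h => brk_ne_one v (brk_mul_eq_brk.1 h.symm).2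

lemma mul_brk_ne_one (a b : OpWord Z) : a * brk b ≠ 1 :=
  fun h => brk_ne_one b (eq_one_and_eq_one_of_mul_eq_one h).2

lemma ne_of_size_lt {x y : OpWord Z} (h : size x < size y) : x ≠ y :=
  fun e => (e ▸ h).false

lemma mul_brk_ne_brk_mul {u v : OpWord Z} (h : u ≠ 1 ∨ v ≠ 1) : u * brk v ≠ brk u * v := by
  rcases u with _ | ⟨z, u⟩ | ⟨x, u⟩
  · simp only [one_eq_one, ne_eq, not_true_eq_false, false_or] at h
    exact fun e => h (brk_mul_eq_brk.1 e.symm).2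
  · exact nofun
  · rw [brkCons_eq_brk_mul, mul_assoc, ne_eq, brk_mul_inj, not_and]
    intro hx
    exact absurd (congrArg size hx) (by simp; omega)

lemma mul_brk_mul_eq_brk_mul_brk {u x v a b : OpWord Z} (h : u * (brk x * v) = brk a * brk b) :
    (u = 1 ∧ x = a ∧ v = brk b) ∨ (u = brk a ∧ x = b ∧ v = 1) := by
  rcases u with _ | ⟨z, u⟩ | ⟨y, u⟩
  · simp only [one_eq_one, one_mul, brk_mul_inj] at h
    exact .inl ⟨rfl, h⟩
  · exact absurd h nofun
  · rw [brkCons_eq_brk_mul, mul_assoc, brk_mul_inj] at h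
    obtain ⟨rfl, h⟩ := h
    rcases u with _ | ⟨z, u⟩ | ⟨y, u⟩
    · simp only [one_eq_one, one_mul, brk_mul_eq_brk] at h
      exact .inr ⟨rfl, h⟩
    · exact absurd h nofun
    · rw [brkCons_eq_brk_mul, mul_assoc, brk_mul_eq_brk] at h
      simpa using (eq_one_and_eq_one_of_mul_eq_one h.2).2

lemma eq_of_brk_mul_brk_mul_eq {a b b' c u v : OpWord Z}
    (h : brk a * (brk b * u) = v * (brk b' * brk c)) (hu : breadth u = 1) :
    v = brk a ∧ b' = b ∧ u = brk c := by
  rcases v with _ | ⟨z, v⟩ | ⟨x, v⟩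
  · simp only [one_eq_one, one_mul, brk_mul_inj, brk_mul_eq_brk] at h
    simp [h.2.2] at hu
  · exact absurd h nofun
  · rw [brkCons_eq_brk_mul, mul_assoc, brk_mul_inj] at h
    obtain ⟨rfl, h⟩ := h
    rcases v with _ | ⟨z, v⟩ | ⟨y, v⟩
    · simp only [one_eq_one, one_mul, brk_mul_inj] at h
      exact ⟨rfl, h.1.symm, h.2⟩
    · exact absurd h nofun
    · rw [brkCons_eq_brk_mul, mul_assoc, brk_mul_inj] at h
      simp [h.2] at hu

@[simp] lemma substVar_mul {Y : Type} (σ : Z → OpWord Y) (u v : OpWord Z) :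
    substVar σ (u * v) = substVar σ u * substVar σ v := by
  induction u with
  | one => rfl
  | var z u ih => exact (congrArg ((σ z).mul) ih).trans (mul_assoc _ _ _).symm
  | brkCons b u _ ih => exact congrArg (brkCons _) ih

@[simp] lemma substVar_brk {Y : Type} (σ : Z → OpWord Y) (u : OpWord Z) :
    substVar σ (brk u) = brk (substVar σ u) := rfl

@[simp] lemma substVar_var_one {Y : Type} (σ : Z → OpWord Y) (z : Z) : substVar σ (var z 1) = σ z :=
  mul_one (σ z)

end OpWord

namespace StarWord

variable {Z : Type}

@[simp] lemma subst_star (x : OpWord Z) : star.subst x = x := rfl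

@[simp] lemma subst_brk (q : StarWord Z) (x : OpWord Z) :
    (brk q).subst x = OpWord.brk (q.subst x) := rfl

@[simp] lemma subst_mul (a b : OpWord Z) (q : StarWord Z) (x : OpWord Z) :
    (mul a q b).subst x = a * (q.subst x * b) := rfl

lemma subst_ne_one (q : StarWord Z) {x : OpWord Z} (hx : x ≠ 1) : q.subst x ≠ 1 := by
  induction q with
  | star => exact hx
  | brk q _ => exact OpWord.brk_ne_one _
  | mul a q b ih =>
    exact fun h => ih (OpWord.eq_one_and_eq_one_of_mul_eq_one
      (OpWord.eq_one_and_eq_one_of_mul_eq_one h).2).1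

lemma exists_subst_eq (q : StarWord Z) :
    (∃ u v, ∀ x, q.subst x = u * (x * v)) ∨
      ∃ u, ∃ p : StarWord Z, ∃ v, ∀ x, q.subst x = u * (OpWord.brk (p.subst x) * v) := by
  induction q with
  | star => exact .inl ⟨1, 1, by simp⟩
  | brk p _ => exact .inr ⟨1, p, 1, by simp⟩
  | mul a q b ih =>
    rcases ih with ⟨u, v, h⟩ | ⟨u, p, v, h⟩
    · exact .inl ⟨a * u, v * b, by simp [h, mul_assoc]⟩
    · exact .inr ⟨a * u, p, v * b, by simp [h, mul_assoc]⟩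

lemma subst_eq_brk_mul_brk {q : StarWord Z} {a b a' b' : OpWord Z}
    (h : q.subst (OpWord.brk a' * OpWord.brk b') = OpWord.brk a * OpWord.brk b) :
    (a' = a ∧ b' = b ∧ ∀ x, q.subst x = x) ∨
    (∃ p : StarWord Z, a = p.subst (OpWord.brk a' * OpWord.brk b') ∧
      ∀ x, q.subst x = (mul 1 (brk p) (OpWord.brk b)).subst x) ∨
    (∃ p : StarWord Z, b = p.subst (OpWord.brk a' * OpWord.brk b') ∧
      ∀ x, q.subst x = (mul (OpWord.brk a) (brk p) 1).subst x) := by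
  rcases exists_subst_eq q with ⟨u, v, hq⟩ | ⟨u, p, v, hq⟩
  · rw [hq, mul_assoc] at h
    rcases OpWord.mul_brk_mul_eq_brk_mul_brk h with ⟨rfl, rfl, hv⟩ | ⟨-, -, hv⟩
    · obtain ⟨rfl, rfl⟩ := OpWord.brk_mul_eq_brk.1 hv
      exact .inl ⟨rfl, rfl, by simp [hq]⟩
    · exact absurd hv (OpWord.brk_mul_ne_one _ _)
  · rw [hq] at h
    rcases OpWord.mul_brk_mul_eq_brk_mul_brk h with ⟨rfl, rfl, rfl⟩ | ⟨rfl, rfl, rfl⟩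
    · exact .inr (.inl ⟨p, rfl, by simp [hq]⟩)
    · exact .inr (.inr ⟨p, rfl, by simp [hq]⟩)

variable {k : Type} [Field k]

@[simp] lemma substF_single (q : StarWord Z) (w : OpWord Z) (c : k) :
    q.substF (Finsupp.single w c) = Finsupp.single (q.subst w) c :=
  Finsupp.mapDomain_single

@[simp] lemma substF_sub (q : StarWord Z) (f g : kM k Z) :
    q.substF (f - g) = q.substF f - q.substF g :=
  Finsupp.mapDomain_sub

@[simp] lemma substF_smul (q : StarWord Z) (c : k) (f : kM k Z) :
    q.substF (c • f) = c • q.substF f :=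
  Finsupp.mapDomain_smul _ _

@[simp] lemma substF_star (f : kM k Z) : star.substF f = f :=
  Finsupp.mapDomain_id

lemma substF_congr {q q' : StarWord Z} (h : ∀ x, q.subst x = q'.subst x) (f : kM k Z) :
    q.substF f = q'.substF f := by
  rw [substF, substF, funext h]

end StarWord

variable {k Z : Type} [Field k]

lemma mulWordRight_eq_substF (f : kM k Z) (u : OpWord Z) :
    mulWordRight f u = (StarWord.mul 1 .star u).substF f := rfl

lemma mulWordLeft_eq_substF (v : OpWord Z) (f : kM k Z) :
    mulWordLeft v f = (StarWord.mul v .star 1).substF f := by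
  rw [mulWordLeft, StarWord.substF]
  congr 1
  funext m
  simp

open OpWord (brk)

section Instances

variable (lam : k)

noncomputable def mrbPhiAt (u v : OpWord Z) : kM k Z := substOPI ![u, v] (mrbPhi k lam)

lemma mrbPhiAt_eq (u v : OpWord Z) :
    mrbPhiAt lam u v = Finsupp.single (brk u * brk v) 1 - Finsupp.single (brk (u * brk v)) 1
      - Finsupp.single (brk (brk u * v)) 1 - lam • Finsupp.single (u * v) 1 := by
  simp [mrbPhiAt, substOPI, mrbPhi, Finsupp.mapDomain_sub, x1, x2]

abbrev mrbS (k : Type) [Field k] (lam : k) (Z : Type) : Set (kM k Z) :=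
  SPhi ({mrbPhi k lam} : Set (kM k (Fin 2))) Z

lemma mem_mrbS_iff {f : kM k Z} : f ∈ mrbS k lam Z ↔ ∃ u v, f = mrbPhiAt lam u v := by
  constructor
  · rintro ⟨φ, rfl, σ, rfl⟩
    refine ⟨σ 0, σ 1, ?_⟩
    rw [mrbPhiAt]
    congr
    ext i
    fin_cases i <;> rfl
  · rintro ⟨u, v, rfl⟩
    exact ⟨mrbPhi k lam, rfl, ![u, v], rfl⟩

end Instances

section Order

variable {lam : k} {lt : OpWord Z → OpWord Z → Prop}

lemma mrbPhiAt_apply_leading (u v : OpWord Z) : mrbPhiAt lam u v (brk u * brk v) = 1 := by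
  simp [mrbPhiAt_eq, OpWord.ne_of_size_lt (x := u * v) (y := brk u * brk v) (by simp; omega)]

def IsRegularPair (lt : OpWord Z → OpWord Z → Prop) (u v : OpWord Z) : Prop :=
  lt (brk (u * brk v)) (brk u * brk v) ∧ lt (brk (brk u * v)) (brk u * brk v)

variable (hlm : ∀ u v : OpWord Z, IsLeadingMonomial lt (mrbPhiAt lam u v) (brk u * brk v))
include hlm

lemma isRegularPair_of_ne {u v : OpWord Z} (h : u ≠ 1 ∨ v ≠ 1) : IsRegularPair lt u v := by
  have hBC := OpWord.mul_brk_ne_brk_mul h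
  have hDB := OpWord.ne_of_size_lt (x := u * v) (y := brk (u * brk v)) (by simp; omega)
  have hDC := OpWord.ne_of_size_lt (x := u * v) (y := brk (brk u * v)) (by simp; omega)
  constructor
  · refine (hlm u v).2 _ ?_ (OpWord.brk_ne_brk_mul_brk _ _ _)
    simp [mrbPhiAt_eq, hBC, hDB]
  · refine (hlm u v).2 _ ?_ (OpWord.brk_ne_brk_mul_brk _ _ _)
    simp [mrbPhiAt_eq, hBC.symm, hDC]

lemma isRegularPair_one_one_or_two_eq_zero : IsRegularPair lt 1 1 ∨ (2 : k) = 0 := by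
  refine or_iff_not_imp_right.2 fun h2 => ?_
  have hlt : lt (brk (brk 1)) (brk 1 * brk 1) := by
    refine (hlm 1 1).2 _ ?_ (OpWord.brk_ne_brk_mul_brk _ _ _)
    simpa [mrbPhiAt_eq] using fun h => h2 (by linear_combination -h)
  exact ⟨hlt, hlt⟩

lemma lt_of_lam_ne_zero (hlam : lam ≠ 0) (u v : OpWord Z) : lt (u * v) (brk u * brk v) := by
  have hDB := OpWord.ne_of_size_lt (x := u * v) (y := brk (u * brk v)) (by simp; omega)
  have hDC := OpWord.ne_of_size_lt (x := u * v) (y := brk (brk u * v)) (by simp; omega)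
  have hDA := OpWord.ne_of_size_lt (x := u * v) (y := brk u * brk v) (by simp; omega)
  refine (hlm u v).2 _ ?_ hDA
  simp [mrbPhiAt_eq, hDA.symm, hDB.symm, hDC.symm, hlam]

end Order

lemma Submodule.smul_mem_of_ne_zero {V : Type} [AddCommGroup V] [Module k V] {M : Submodule k V}
    {c : k} {x : V} (h : c ≠ 0 → x ∈ M) : c • x ∈ M := by
  rcases eq_or_ne c 0 with rfl | hc
  · rw [zero_smul]
    exact M.zero_mem
  · exact M.smul_mem c (h hc)

section Span

variable {lt : OpWord Z → OpWord Z → Prop}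

lemma IsMonomialOrder.lt_trans (h : IsMonomialOrder lt) {x y z : OpWord Z} (hxy : lt x y)
    (hyz : lt y z) : lt x z :=
  have := h.wellOrder
  _root_.trans hxy hyz

lemma IsMonomialOrder.mul_lt_mul_left (h : IsMonomialOrder lt) (c : OpWord Z) {x y : OpWord Z}
    (hxy : lt x y) : lt (c * x) (c * y) := by
  simpa using h.compat (.mul c .star 1) x y hxy

lemma IsMonomialOrder.mul_lt_mul_right (h : IsMonomialOrder lt) (c : OpWord Z) {x y : OpWord Z}
    (hxy : lt x y) : lt (x * c) (y * c) := by
  simpa using h.compat (.mul 1 .star c) x y hxy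

lemma IsLeadingMonomial.unique (hmo : IsMonomialOrder lt) {s : kM k Z} {w w' : OpWord Z}
    (h : IsLeadingMonomial lt s w) (h' : IsLeadingMonomial lt s w') : w = w' := by
  by_contra hne
  have := hmo.wellOrder
  exact asymm (h'.2 w h.1 hne) (h.2 w' h'.1 (Ne.symm hne))

noncomputable def lowerSpan (lt : OpWord Z → OpWord Z → Prop) (S : Set (kM k Z))
    (w : OpWord Z) : Submodule k (kM k Z) :=
  Submodule.span k {x | ∃ s ∈ S, ∃ ws, IsLeadingMonomial lt s ws ∧
    ∃ q : StarWord Z, lt (q.subst ws) w ∧ x = q.substF s}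

lemma trivialMod_of_mem_lowerSpan {S : Set (kM k Z)} {w : OpWord Z} {x : kM k Z}
    (hx : x ∈ lowerSpan lt S w) : TrivialMod lt S w x := by
  obtain ⟨n, c, g, rfl⟩ := Submodule.mem_span_set'.1 hx
  choose s hs ws hws q hq hg using fun i => (g i).2
  exact ⟨n, c, q, s, hs, fun i => ⟨ws i, hws i, hq i⟩, by simp only [hg]⟩

variable {lam : k}
  (hlm : ∀ u v : OpWord Z, IsLeadingMonomial lt (mrbPhiAt lam u v) (brk u * brk v))
include hlm

lemma monicVersion_mrbS (hmo : IsMonomialOrder lt) :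
    MonicVersion lt (mrbS k lam Z) = mrbS k lam Z := by
  ext f
  constructor
  · rintro ⟨s, hs, w, hw, rfl⟩
    obtain ⟨u, v, rfl⟩ := (mem_mrbS_iff lam).1 hs
    rwa [hw.unique hmo (hlm u v), mrbPhiAt_apply_leading, inv_one, one_smul]
  · intro hf
    obtain ⟨u, v, rfl⟩ := (mem_mrbS_iff lam).1 hf
    exact ⟨_, hf, _, hlm u v, by rw [mrbPhiAt_apply_leading, inv_one, one_smul]⟩

lemma substF_mem_lowerSpan {q : StarWord Z} {u v w : OpWord Z}
    (h : lt (q.subst (brk u * brk v)) w) :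
    q.substF (mrbPhiAt lam u v) ∈ lowerSpan lt (mrbS k lam Z) w :=
  Submodule.subset_span ⟨_, (mem_mrbS_iff lam).2 ⟨u, v, rfl⟩, _, hlm u v, q, h, rfl⟩

lemma mrbPhiAt_mem_lowerSpan {u v w : OpWord Z} (h : lt (brk u * brk v) w) :
    mrbPhiAt lam u v ∈ lowerSpan lt (mrbS k lam Z) w := by
  simpa using substF_mem_lowerSpan hlm (q := .star) h

lemma add_mem_of_forall_lt_brk {M : Submodule k (kM k Z)} {F : OpWord Z → kM k Z}
    (u v : OpWord Z) (hF : ∀ x, lt (brk x) (brk u * brk v) → F x ∈ M) :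
    F (u * brk v) + F (brk u * v) ∈ M := by
  by_cases hreg : IsRegularPair lt u v
  · exact add_mem (hF _ hreg.1) (hF _ hreg.2)
  obtain ⟨rfl, rfl⟩ : u = 1 ∧ v = 1 := by
    by_contra h
    exact hreg (isRegularPair_of_ne hlm (not_and_or.1 h))
  have h2 : (2 : k) = 0 := (isRegularPair_one_one_or_two_eq_zero hlm).resolve_left hreg
  rw [mul_one, one_mul, ← two_smul k, h2, zero_smul]
  exact M.zero_mem

end Span

section Compositions

variable {lam : k} {lt : OpWord Z → OpWord Z → Prop}

lemma mulWordRight_sub_mulWordLeft_eq (lam : k) (a b c : OpWord Z) :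
    mulWordRight (mrbPhiAt lam a b) (brk c) - mulWordLeft (brk a) (mrbPhiAt lam b c)
      = (mrbPhiAt lam a (b * brk c) + mrbPhiAt lam a (brk b * c))
        - (mrbPhiAt lam (a * brk b) c + mrbPhiAt lam (brk a * b) c)
        + ((StarWord.brk (.mul 1 .star c)).substF (mrbPhiAt lam a b)
          - (StarWord.brk (.mul a .star 1)).substF (mrbPhiAt lam b c)) := by
  simp only [mulWordRight_eq_substF, mulWordLeft_eq_substF, mrbPhiAt_eq, StarWord.substF_sub,
    StarWord.substF_smul, StarWord.substF_single, StarWord.subst_mul, StarWord.subst_brk,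
    StarWord.subst_star, one_mul, mul_one, mul_assoc]
  module

lemma substF_left_eq (lam : k) (p : StarWord Z) (a' b' b : OpWord Z) :
    mrbPhiAt lam (p.subst (brk a' * brk b')) b
        - (StarWord.mul 1 (.brk p) (brk b)).substF (mrbPhiAt lam a' b')
      = (mrbPhiAt lam (p.subst (brk (a' * brk b'))) b
          + mrbPhiAt lam (p.subst (brk (brk a' * b'))) b)
        + lam • mrbPhiAt lam (p.subst (a' * b')) b
        - (StarWord.brk (.mul 1 p (brk b))).substF (mrbPhiAt lam a' b')
        - (StarWord.brk (.mul 1 (.brk p) b)).substF (mrbPhiAt lam a' b')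
        - lam • (StarWord.mul 1 p b).substF (mrbPhiAt lam a' b') := by
  simp only [mrbPhiAt_eq, StarWord.substF_sub, StarWord.substF_smul, StarWord.substF_single,
    StarWord.subst_mul, StarWord.subst_brk, one_mul]
  module

lemma substF_right_eq (lam : k) (p : StarWord Z) (a a' b' : OpWord Z) :
    mrbPhiAt lam a (p.subst (brk a' * brk b'))
        - (StarWord.mul (brk a) (.brk p) 1).substF (mrbPhiAt lam a' b')
      = (mrbPhiAt lam a (p.subst (brk (a' * brk b')))
          + mrbPhiAt lam a (p.subst (brk (brk a' * b'))))
        + lam • mrbPhiAt lam a (p.subst (a' * b'))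
        - (StarWord.brk (.mul a (.brk p) 1)).substF (mrbPhiAt lam a' b')
        - (StarWord.brk (.mul (brk a) p 1)).substF (mrbPhiAt lam a' b')
        - lam • (StarWord.mul a p 1).substF (mrbPhiAt lam a' b') := by
  simp only [mrbPhiAt_eq, StarWord.substF_sub, StarWord.substF_smul, StarWord.substF_single,
    StarWord.subst_mul, StarWord.subst_brk, mul_one]
  module

variable (hmo : IsMonomialOrder lt)
  (hlm : ∀ u v : OpWord Z, IsLeadingMonomial lt (mrbPhiAt lam u v) (brk u * brk v))
include hmo hlm

lemma brk_brk_mul_brk_mul_lt {a b c : OpWord Z} (h : ¬(a = 1 ∧ b = 1 ∧ c = 1)) :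
    lt (brk (brk a * (brk b * c))) (brk a * (brk b * brk c)) := by
  by_cases hbc : IsRegularPair lt b c
  · exact hmo.lt_trans (isRegularPair_of_ne hlm (.inr (OpWord.brk_mul_ne_one _ _))).2
      (hmo.mul_lt_mul_left _ hbc.2)
  obtain ⟨rfl, rfl⟩ : b = 1 ∧ c = 1 := by
    by_contra hbc'
    exact hbc (isRegularPair_of_ne hlm (not_and_or.1 hbc'))
  have ha : a ≠ 1 := fun ha => h ⟨ha, rfl, rfl⟩
  simpa [mul_assoc] using hmo.lt_trans (isRegularPair_of_ne hlm (.inl (OpWord.brk_ne_one a))).1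
    (hmo.mul_lt_mul_right (brk 1) (isRegularPair_of_ne hlm (.inl ha)).2)

lemma brk_mul_brk_mul_brk_lt {a b c : OpWord Z} (h : ¬(a = 1 ∧ b = 1 ∧ c = 1)) :
    lt (brk (a * (brk b * brk c))) (brk a * (brk b * brk c)) := by
  by_cases hab : IsRegularPair lt a b
  · simpa [mul_assoc] using hmo.lt_trans
      (isRegularPair_of_ne hlm (.inl (OpWord.mul_brk_ne_one a b)) (v := c)).1
      (hmo.mul_lt_mul_right (brk c) hab.1)
  obtain ⟨rfl, rfl⟩ : a = 1 ∧ b = 1 := by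
    by_contra hab'
    exact hab (isRegularPair_of_ne hlm (not_and_or.1 hab'))
  have hc : c ≠ 1 := fun hc => h ⟨rfl, rfl, hc⟩
  simpa using hmo.lt_trans (isRegularPair_of_ne hlm (.inr (OpWord.brk_ne_one c))).2
    (hmo.mul_lt_mul_left (brk 1) (isRegularPair_of_ne hlm (u := 1) (.inr hc)).1)

lemma bracket_sub_mem_lowerSpan (a b c : OpWord Z) :
    (StarWord.brk (.mul 1 .star c)).substF (mrbPhiAt lam a b)
        - (StarWord.brk (.mul a .star 1)).substF (mrbPhiAt lam b c)
      ∈ lowerSpan lt (mrbS k lam Z) (brk a * (brk b * brk c)) := by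
  by_cases h : a = 1 ∧ b = 1 ∧ c = 1
  · obtain ⟨rfl, rfl, rfl⟩ := h
    rw [sub_self]
    exact Submodule.zero_mem _
  refine sub_mem (substF_mem_lowerSpan hlm ?_) (substF_mem_lowerSpan hlm ?_)
  · simpa [mul_assoc] using brk_brk_mul_brk_mul_lt hmo hlm h
  · simpa [mul_assoc] using brk_mul_brk_mul_brk_lt hmo hlm h

lemma mulWordRight_sub_mulWordLeft_mem_lowerSpan (a b c : OpWord Z) :
    mulWordRight (mrbPhiAt lam a b) (brk c) - mulWordLeft (brk a) (mrbPhiAt lam b c)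
      ∈ lowerSpan lt (mrbS k lam Z) (brk a * (brk b * brk c)) := by
  rw [mulWordRight_sub_mulWordLeft_eq]
  refine add_mem (sub_mem ?_ ?_) (bracket_sub_mem_lowerSpan hmo hlm a b c)
  · exact add_mem_of_forall_lt_brk hlm (F := mrbPhiAt lam a) b c fun x hx =>
      mrbPhiAt_mem_lowerSpan hlm (hmo.mul_lt_mul_left _ hx)
  · exact add_mem_of_forall_lt_brk hlm (F := fun x => mrbPhiAt lam x c) a b fun x hx =>
      mrbPhiAt_mem_lowerSpan hlm (by simpa [mul_assoc] using hmo.mul_lt_mul_right (brk c) hx)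

lemma substF_left_mem_lowerSpan (p : StarWord Z) (a' b' b : OpWord Z) :
    mrbPhiAt lam (p.subst (brk a' * brk b')) b
        - (StarWord.mul 1 (.brk p) (brk b)).substF (mrbPhiAt lam a' b')
      ∈ lowerSpan lt (mrbS k lam Z) (brk (p.subst (brk a' * brk b')) * brk b) := by
  have ha : p.subst (brk a' * brk b') ≠ 1 := p.subst_ne_one (OpWord.brk_mul_ne_one _ _)
  have hctx {x y : OpWord Z} (hxy : lt x y) :
      lt (brk (p.subst x) * brk b) (brk (p.subst y) * brk b) := by
    simpa using hmo.compat (.mul 1 (.brk p) (brk b)) x y hxy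
  rw [substF_left_eq]
  refine sub_mem (sub_mem (sub_mem (add_mem ?_ ?_) ?_) ?_) ?_
  · exact add_mem_of_forall_lt_brk hlm (F := fun x => mrbPhiAt lam (p.subst (brk x)) b) a' b'
      fun x hx => mrbPhiAt_mem_lowerSpan hlm (hctx hx)
  · exact Submodule.smul_mem_of_ne_zero fun hlam =>
      mrbPhiAt_mem_lowerSpan hlm (hctx (lt_of_lam_ne_zero hlm hlam a' b'))
  · exact substF_mem_lowerSpan hlm (by simpa using (isRegularPair_of_ne hlm (.inl ha)).1)
  · exact substF_mem_lowerSpan hlm (by simpa using (isRegularPair_of_ne hlm (.inl ha)).2)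
  · exact Submodule.smul_mem_of_ne_zero fun hlam =>
      substF_mem_lowerSpan hlm (by simpa using lt_of_lam_ne_zero hlm hlam _ b)

lemma substF_right_mem_lowerSpan (p : StarWord Z) (a a' b' : OpWord Z) :
    mrbPhiAt lam a (p.subst (brk a' * brk b'))
        - (StarWord.mul (brk a) (.brk p) 1).substF (mrbPhiAt lam a' b')
      ∈ lowerSpan lt (mrbS k lam Z) (brk a * brk (p.subst (brk a' * brk b'))) := by
  have hb : p.subst (brk a' * brk b') ≠ 1 := p.subst_ne_one (OpWord.brk_mul_ne_one _ _)
  have hctx {x y : OpWord Z} (hxy : lt x y) :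
      lt (brk a * brk (p.subst x)) (brk a * brk (p.subst y)) := by
    simpa using hmo.compat (.mul (brk a) (.brk p) 1) x y hxy
  rw [substF_right_eq]
  refine sub_mem (sub_mem (sub_mem (add_mem ?_ ?_) ?_) ?_) ?_
  · exact add_mem_of_forall_lt_brk hlm (F := fun x => mrbPhiAt lam a (p.subst (brk x))) a' b'
      fun x hx => mrbPhiAt_mem_lowerSpan hlm (hctx hx)
  · exact Submodule.smul_mem_of_ne_zero fun hlam =>
      mrbPhiAt_mem_lowerSpan hlm (hctx (lt_of_lam_ne_zero hlm hlam a' b'))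
  · exact substF_mem_lowerSpan hlm (by simpa using (isRegularPair_of_ne hlm (.inr hb)).1)
  · exact substF_mem_lowerSpan hlm (by simpa using (isRegularPair_of_ne hlm (.inr hb)).2)
  · exact Submodule.smul_mem_of_ne_zero fun hlam =>
      substF_mem_lowerSpan hlm (by simpa using lt_of_lam_ne_zero hlm hlam a _)

lemma trivialMod_intersection {f g : kM k Z} (hf : f ∈ mrbS k lam Z) (hg : g ∈ mrbS k lam Z)
    {wf wg u v w : OpWord Z} (hwf : IsLeadingMonomial lt f wf) (hwg : IsLeadingMonomial lt g wg)
    (hwu : w = wf.mul u) (hwv : w = v.mul wg) (hb₁ : max wf.breadth wg.breadth < w.breadth)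
    (hb₂ : w.breadth < wf.breadth + wg.breadth) :
    TrivialMod lt (mrbS k lam Z) w (mulWordRight f u - mulWordLeft v g) := by
  obtain ⟨a, b, rfl⟩ := (mem_mrbS_iff lam).1 hf
  obtain ⟨b', c, rfl⟩ := (mem_mrbS_iff lam).1 hg
  obtain rfl := hwf.unique hmo (hlm a b)
  obtain rfl := hwg.unique hmo (hlm b' c)
  simp only [OpWord.mul_eq_mul] at hwu hwv
  subst hwu
  have hu : u.breadth = 1 := by simp at hb₁ hb₂; omega
  obtain ⟨rfl, rfl, rfl⟩ := OpWord.eq_of_brk_mul_brk_mul_eq (by simpa [mul_assoc] using hwv) hu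
  exact trivialMod_of_mem_lowerSpan (by
    simpa [mul_assoc] using mulWordRight_sub_mulWordLeft_mem_lowerSpan hmo hlm a b' c)

lemma trivialMod_inclusion {f g : kM k Z} (hf : f ∈ mrbS k lam Z) (hg : g ∈ mrbS k lam Z)
    {wf wg : OpWord Z} {q : StarWord Z} (hwf : IsLeadingMonomial lt f wf)
    (hwg : IsLeadingMonomial lt g wg) (hq : wf = q.subst wg) :
    TrivialMod lt (mrbS k lam Z) wf (f - q.substF g) := by
  obtain ⟨a, b, rfl⟩ := (mem_mrbS_iff lam).1 hf
  obtain ⟨a', b', rfl⟩ := (mem_mrbS_iff lam).1 hg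
  obtain rfl := hwf.unique hmo (hlm a b)
  obtain rfl := hwg.unique hmo (hlm a' b')
  apply trivialMod_of_mem_lowerSpan
  rcases StarWord.subst_eq_brk_mul_brk hq.symm with
    ⟨rfl, rfl, hctx⟩ | ⟨p, rfl, hctx⟩ | ⟨p, rfl, hctx⟩
  · rw [StarWord.substF_congr (q' := .star) hctx, StarWord.substF_star, sub_self]
    exact Submodule.zero_mem _
  · rw [StarWord.substF_congr hctx]
    exact substF_left_mem_lowerSpan hmo hlm p a' b' b
  · rw [StarWord.substF_congr hctx]
    exact substF_right_mem_lowerSpan hmo hlm p a a' b'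

theorem isGSBasis_mrbS : IsGSBasis lt (mrbS k lam Z) := by
  rw [IsGSBasis, monicVersion_mrbS hlm hmo]
  exact ⟨fun _ hf _ hg _ _ _ _ _ => trivialMod_intersection hmo hlm hf hg,
    fun _ hf _ hg _ _ _ => trivialMod_inclusion hmo hlm hf hg⟩

end Compositions

/-- Let `λ ∈ k` and `φ` be the modified Rota–Baxter OPI of
weight `λ`. Let `Z` be a set and `≤` a monomial order on `M(Z)` such that
`lm(φ(u₁,u₂)) = ⌊u₁⌋⌊u₂⌋` for all `u₁, u₂ ∈ M(Z)`. Then `S_φ(Z)` is a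
Gröbner–Shirshov basis in `kM(Z)` with respect to `≤`; hence, whenever such a
monomial order exists for every set `Z`, the modified Rota–Baxter OPI is
Gröbner–Shirshov. -/
theorem mrb_GS (k : Type) [Field k] (lam : k) (Z : Type)
    (lt : OpWord Z → OpWord Z → Prop) (h : IsMonomialOrder lt)
    (hlm : ∀ u₁ u₂ : OpWord Z,
      IsLeadingMonomial lt (substOPI ![u₁, u₂] (mrbPhi k lam))
        ((OpWord.brk u₁).mul (OpWord.brk u₂))) :
    IsGSBasis lt (SPhi ({mrbPhi k lam} : Set (kM k (Fin 2))) Z) ∧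
    ((∀ Z' : Type, ∃ lt' : OpWord Z' → OpWord Z' → Prop, IsMonomialOrder lt' ∧
        ∀ u₁ u₂ : OpWord Z',
          IsLeadingMonomial lt' (substOPI ![u₁, u₂] (mrbPhi k lam))
            ((OpWord.brk u₁).mul (OpWord.brk u₂))) →
      GSOPI ({mrbPhi k lam} : Set (kM k (Fin 2)))) := by
  refine ⟨isGSBasis_mrbS h hlm, fun hall Z' => ?_⟩
  obtain ⟨lt', hmo', hlm'⟩ := hall Z'
  exact ⟨lt', hmo', isGSBasis_mrbS hmo' hlm'⟩

end RotaGS
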